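/- arXiv:1209.2683 — 2 statements merged into one kernel-verified Lean document; each statement's English description precedes it below -/
import Mathlib

section
/- For every natural number N ≥ 1, one has ∑_{k=0}^{⌊N/2⌋} (N - 2k + 1)² · N! / (k! · (N - k + 1)!) = 2^N. -/
open Finset

lemma sumC (n : ℕ) : ∑ k ∈ range (n+1), ((n.choose k : ℚ)) = 2^n := by
  exact_mod_cast Nat.sum_range_choose n

lemma key_cast (n k : ℕ) : ((k:ℚ)+1) * ((n+1).choose (k+1)) = ((n:ℚ)+1) * (n.choose k) := by
  have h : ((Nat.succ n * n.choose k : ℕ) : ℚ) = (((n+1).choose (k+1) * (k+1) : ℕ) : ℚ) := by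
    rw [Nat.add_one_mul_choose_eq]
  push_cast at h
  linarith

lemma sumKC (n : ℕ) : ∑ k ∈ range (n+2), (k:ℚ) * ((n+1).choose k) = ((n:ℚ)+1) * 2^n := by
  rw [Finset.sum_range_succ']
  simp only [Nat.cast_zero, zero_mul, add_zero]
  have : ∀ k ∈ range (n+1), ((k:ℚ)+1) * ((n+1).choose (k+1)) = ((n:ℚ)+1) * (n.choose k) := by
    intro k _; exact key_cast n k
  rw [Finset.sum_congr rfl (by intro k hk; push_cast; exact key_cast n k), ← Finset.mul_sum, sumC]

lemma sumKKC (n : ℕ) : ∑ k ∈ range (n+3), (k:ℚ) * ((k:ℚ)-1) * ((n+2).choose k) = ((n:ℚ)+2) * ((n:ℚ)+1) * 2^n := by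
  rw [Finset.sum_range_succ', Finset.sum_range_succ']
  simp only [Nat.cast_zero, Nat.cast_one]
  have h : ∀ k ∈ range (n+1), (((k:ℕ)+1+1:ℕ):ℚ) * ((((k:ℕ)+1+1:ℕ):ℚ)-1) * ((n+2).choose (k+1+1)) = ((n:ℚ)+2) * ((n:ℚ)+1) * (n.choose k) := by
    intro k _
    have h1 := key_cast (n+1) (k+1)
    have h2 := key_cast n k
    push_cast at h1 h2 ⊢
    have hk2 : ((k:ℚ)+2) ≠ 0 := by positivity
    nlinarith [h1, h2]
  rw [Finset.sum_congr rfl h, ← Finset.mul_sum, sumC]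
  push_cast
  ring

lemma fullsum (n : ℕ) : ∑ k ∈ range (n+3), ((n:ℚ)+2-2*k)^2 * ((n+2).choose k) = ((n:ℚ)+2) * 2^(n+2) := by
  have h : ∀ k ∈ range (n+3), ((n:ℚ)+2-2*k)^2 * ((n+2).choose k)
      = ((n:ℚ)+2)^2 * ((n+2).choose k) + (4 - 4*((n:ℚ)+2)) * ((k:ℚ) * ((n+2).choose k))
        + 4 * ((k:ℚ) * ((k:ℚ)-1) * ((n+2).choose k)) := by
    intro k _; ring
  rw [Finset.sum_congr rfl h, Finset.sum_add_distrib, Finset.sum_add_distrib,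
    ← Finset.mul_sum, ← Finset.mul_sum, ← Finset.mul_sum]
  have e1 := sumC (n+2)
  have e2 := sumKC (n+1)
  have e3 := sumKKC n
  push_cast at e1 e2 e3 ⊢
  rw [e1, e2, e3]
  ring

lemma halfsum (N : ℕ) (hN : 1 ≤ N) :
    ∑ k ∈ range (N/2+1), ((N:ℚ)+1-2*k)^2 * ((N+1).choose k) = ((N:ℚ)+1) * 2^N := by
  set f : ℕ → ℚ := fun k => ((N:ℚ)+1-2*k)^2 * ((N+1).choose k) with hf
  have hsym : ∀ j ∈ Finset.Ico (N/2+1) (N+2), f j = f ((N+1) - j) := by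
    intro j hj
    rw [Finset.mem_Ico] at hj
    have hj1 : j ≤ N+1 := by omega
    simp only [hf]
    rw [Nat.choose_symm hj1, Nat.cast_sub hj1]
    push_cast
    ring_nf
  have hfull : ∑ k ∈ range (N+2), f k = ((N:ℚ)+1)*2^(N+1) := by
    obtain ⟨n, rfl⟩ : ∃ n, N = n+1 := ⟨N-1, by omega⟩
    have h := fullsum n
    have : ∀ k ∈ range (n+3), f k = ((n:ℚ)+2-2*k)^2 * ((n+2).choose k) := by
      intro k _; simp only [hf]; push_cast; ring_nf
    rw [Finset.sum_congr rfl this, h]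
    push_cast
    ring
  have hsplit : ∑ k ∈ range (N/2+1), f k + ∑ k ∈ Finset.Ico (N/2+1) (N+2), f k
      = ∑ k ∈ range (N+2), f k := by
    simp only [Finset.range_eq_Ico]
    exact Finset.sum_Ico_consecutive f (by omega) (by omega)
  have htail : ∑ k ∈ Finset.Ico (N/2+1) (N+2), f k = ∑ k ∈ range (N+2-(N/2+1)), f k := by
    rw [Finset.sum_congr rfl hsym]
    have := Finset.sum_Ico_reflect f (N/2+1) (n := N+1) (m := N+2) (by omega)
    have e0 : N+2-(N+2) = 0 := by omega
    rw [this, e0, ← Finset.range_eq_Ico]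
  have htail2 : ∑ k ∈ range (N+2-(N/2+1)), f k = ∑ k ∈ range (N/2+1), f k := by
    rcases Nat.even_or_odd N with ⟨m, rfl⟩ | ⟨m, rfl⟩
    · have h' : m+m+2-((m+m)/2+1) = (m+m)/2+1 := by omega
      rw [h']
    · have h1 : 2*m+1+2-((2*m+1)/2+1) = (m+1)+1 := by omega
      have h2 : (2*m+1)/2+1 = m+1 := by omega
      rw [h1, h2, Finset.sum_range_succ]
      have : f (m+1) = 0 := by
        simp only [hf]
        have : ((2*m+1:ℕ):ℚ)+1-2*((m+1:ℕ):ℚ) = 0 := by push_cast; ring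
        push_cast at this ⊢
        rw [this]
        ring
      rw [this, add_zero]
  have : ∑ k ∈ range (N/2+1), f k + ∑ k ∈ range (N/2+1), f k = ((N:ℚ)+1)*2^(N+1) := by
    rw [← hfull, ← hsplit, htail, htail2]
  have h2 : (2:ℚ)^(N+1) = 2 * 2^N := by ring
  rw [h2] at this
  linarith

/-- SU(2) dimension-counting identity underlying the Schur–Weyl decomposition of
`(ℂ²)^{⊗N}`: summing `(2s+1) · g_s(N)` over admissible spins (reindexed by
`k = N/2 - s`) recovers the total dimension `2^N`. -/
theorem schur_weyl_dimension_count (N : ℕ) (hN : 1 ≤ N) :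
    ∑ k ∈ Finset.range (N / 2 + 1),
      ((N : ℚ) - 2 * k + 1) ^ 2 * (Nat.factorial N) /
        ((Nat.factorial k) * (Nat.factorial (N - k + 1))) = 2 ^ N := by
  have hterm : ∀ k ∈ Finset.range (N/2+1),
      ((N : ℚ) - 2 * k + 1) ^ 2 * (Nat.factorial N) /
        ((Nat.factorial k) * (Nat.factorial (N - k + 1)))
      = ((N:ℚ)+1-2*k)^2 * ((N+1).choose k) / ((N:ℚ)+1) := by
    intro k hk
    rw [Finset.mem_range] at hk
    have hkN : k ≤ N + 1 := by omega
    have hc := Nat.cast_choose ℚ hkN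
    have hsub : N + 1 - k = N - k + 1 := by omega
    rw [hsub, Nat.factorial_succ (N)] at hc
    rw [hc]
    have h1 : ((k.factorial : ℚ)) ≠ 0 := by positivity
    have h2 : (((N-k+1).factorial : ℚ)) ≠ 0 := by positivity
    have h3 : ((N:ℚ)+1) ≠ 0 := by positivity
    push_cast
    field_simp
    ring
  rw [Finset.sum_congr rfl hterm, ← Finset.sum_div, halfsum N hN]
  field_simp
end

section
/- Let N be an odd natural number, N ≥ 1. Then 2 · ∑_{s=0}^{(N-1)/2} ( s/((N+1)/2 - s) + (s+1)/((N+3)/2 + s) ) · (2s+1) · (N-1)! / ( ((N-1)/2 - s)! · ((N-1)/2 + s + 1)! ) = (1/(2N)) · ∑_{k=0}^{N} ( (N - 2k - 1)/(k+1) + (N - 2k + 1)/(N - k + 1) ) · (N - 2k) · C(N,k), where both sums are over rational numbers and s ranges over integers. -/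
lemma aux_sym (A K C : ℚ) (h1 : K + 1 ≠ 0) (h2 : A - K + 1 ≠ 0) :
    ((A - 2*(A - K) - 1) / ((A - K) + 1) + (A - 2*(A - K) + 1) / (A - (A - K) + 1)) * (A - 2*(A - K)) * C
    = ((A - 2*K - 1) / (K + 1) + (A - 2*K + 1) / (A - K + 1)) * (A - 2*K) * C := by
  have h1' : A - (A - K) + 1 ≠ 0 := by intro h; apply h1; linarith
  have h2' : (A - K) + 1 ≠ 0 := h2
  field_simp
  ring

lemma aux_term (A B C M S : ℚ) (hA : A ≠ 0) (hB : B ≠ 0) (hS : 0 ≤ S) (hSM : S ≤ M) :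
    2 * ((S / ((2*M+1 + 1) / 2 - S) + (S + 1) / ((2*M+1 + 3) / 2 + S)) * (2*S+1) * C / (A * B))
    = 1 / (2*(2*M+1)) * (2 * ((((2*M+1) - 2*(M-S) - 1) / ((M-S) + 1) + ((2*M+1) - 2*(M-S) + 1) / ((2*M+1) - (M-S) + 1)) * ((2*M+1) - 2*(M-S)) * ((2*M+1) * C / (A*B)))) := by
  have e1 : (2*M+1 + 1)/2 - S = M + 1 - S := by ring
  have e2 : (2*M+1 + 3)/2 + S = M + 2 + S := by ring
  have e3 : (M - S) + 1 = M + 1 - S := by ring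
  have e4 : (2*M+1) - (M-S) + 1 = M + 2 + S := by ring
  rw [e1, e2, e3, e4]
  have d1 : M + 1 - S ≠ 0 := by intro h; linarith
  have d2 : M + 2 + S ≠ 0 := by intro h; linarith
  have d5 : (2*M+1 : ℚ) ≠ 0 := by intro h; linarith
  field_simp
  ring

/-- Reindexing/symmetrization identity for `Tr Π₁` in the port-based teleportation
recycling protocol: the spin sum over `s ∈ [0, (N-1)/2]` equals the symmetrized
binomial sum over `k ∈ [0, N]` (for odd `N`), via the substitution
`s = N/2 - (k + 1/2)`. -/
theorem trPi_reindexing (N : ℕ) (hN : 1 ≤ N) (hodd : Odd N) :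
    2 * ∑ s ∈ Finset.range ((N - 1) / 2 + 1),
        ((s : ℚ) / (((N : ℚ) + 1) / 2 - s) + ((s : ℚ) + 1) / (((N : ℚ) + 3) / 2 + s)) *
          (2 * s + 1) * (Nat.factorial (N - 1)) /
            ((Nat.factorial ((N - 1) / 2 - s)) * (Nat.factorial ((N - 1) / 2 + s + 1)))
    = (1 / (2 * (N : ℚ))) * ∑ k ∈ Finset.range (N + 1),
        (((N : ℚ) - 2 * k - 1) / ((k : ℚ) + 1) +
          ((N : ℚ) - 2 * k + 1) / ((N : ℚ) - k + 1)) * ((N : ℚ) - 2 * k) * (N.choose k) := by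
  obtain ⟨m, rfl⟩ := hodd
  have hd : (2*m+1-1)/2 = m := by omega
  have hd2 : 2*m+1-1 = 2*m := by omega
  rw [hd, hd2]
  set g : ℕ → ℚ := fun k =>
    ((((2*m+1 : ℕ) : ℚ) - 2 * k - 1) / ((k : ℚ) + 1) +
      (((2*m+1 : ℕ) : ℚ) - 2 * k + 1) / (((2*m+1 : ℕ) : ℚ) - (k : ℚ) + 1)) *
      (((2*m+1 : ℕ) : ℚ) - 2 * k) * ((2*m+1).choose k) with hg
  have hsym : ∀ s ∈ Finset.range (m+1), g ((m+1) + s) = g (m - s) := by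
    intro s hs
    rw [Finset.mem_range] at hs
    have h1 : (m+1) + s = 2*m+1 - (m - s) := by omega
    rw [hg]
    simp only
    rw [h1, Nat.choose_symm (by omega : m - s ≤ 2*m+1),
        Nat.cast_sub (by omega : m - s ≤ 2*m+1)]
    have hKA : ((m - s : ℕ) : ℚ) ≤ ((2*m+1 : ℕ) : ℚ) := Nat.cast_le.mpr (by omega)
    exact aux_sym _ _ _ (by positivity) (by intro h; linarith)
  have hrefl : ∑ s ∈ Finset.range (m+1), g (m - s) = ∑ k ∈ Finset.range (m+1), g k := by
    rw [← Finset.sum_range_reflect g (m+1)]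
    apply Finset.sum_congr rfl
    intro i _
    congr 1
  have hR : ∑ k ∈ Finset.range (2*m+1+1), g k = 2 * ∑ s ∈ Finset.range (m+1), g (m - s) := by
    have hrange : 2*m+1+1 = (m+1)+(m+1) := by ring
    rw [hrange, Finset.sum_range_add, Finset.sum_congr rfl hsym, hrefl, ← two_mul]
  rw [hR]
  rw [Finset.mul_sum, Finset.mul_sum, Finset.mul_sum]
  apply Finset.sum_congr rfl
  intro s hs
  rw [Finset.mem_range] at hs
  have hs' : s ≤ m := by omega
  have key : (((2*m+1).choose (m-s) : ℕ) : ℚ) * ((m-s).factorial * (m+s+1).factorial) =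
      ((2*m+1 : ℕ) : ℚ) * (2*m).factorial := by
    have h1 := Nat.choose_mul_factorial_mul_factorial (by omega : m - s ≤ 2*m+1)
    have h2 : 2*m+1 - (m-s) = m+s+1 := by omega
    rw [h2] at h1
    have h3 : (2*m+1).factorial = (2*m+1) * (2*m).factorial := Nat.factorial_succ (2*m)
    rw [h3] at h1
    exact_mod_cast congrArg (Nat.cast (R := ℚ))
      (by linarith [h1] : (2*m+1).choose (m-s) * ((m-s).factorial * (m+s+1).factorial)
          = (2*m+1) * (2*m).factorial)
  have f1 : (((m-s).factorial : ℕ) : ℚ) ≠ 0 := Nat.cast_ne_zero.mpr (Nat.factorial_ne_zero _)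
  have f2 : (((m+s+1).factorial : ℕ) : ℚ) ≠ 0 := Nat.cast_ne_zero.mpr (Nat.factorial_ne_zero _)
  have hc : (((2*m+1).choose (m-s) : ℕ) : ℚ) =
      ((2*m+1 : ℕ) : ℚ) * (2*m).factorial / ((m-s).factorial * (m+s+1).factorial) := by
    rw [eq_div_iff (by positivity)]
    exact key
  have hc2 : ((m - s : ℕ) : ℚ) = (m:ℚ) - (s:ℚ) := by
    rw [Nat.cast_sub hs']
  rw [hg]
  simp only
  rw [hc, hc2]
  push_cast
  exact aux_term _ _ _ _ _ f1 f2 (by positivity) (Nat.cast_le.mpr hs')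
end
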